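/- arXiv:2304.09999 — 2 statements merged into one kernel-verified Lean document; each statement's English description precedes it below -/
import Mathlib

section
/- Let k be a field, V = k^n, and fix the data (W_{x,i}), P_x, L_x, ℛ, G_P as in the context, for g, m ≥ 0. Define Φ : ℛ → Hom(Γ_{g,m}, GL(V)) by Φ(φ)(a_i) = A_i, Φ(φ)(b_i) = B_i, Φ(φ)(c_x) = C_{x,2}·C_{x,1}. Then: (a) Φ is well defined (the images of the generators satisfy the defining relation of Γ_{g,m}); (b) the image of Φ is exactly the set of homomorphisms ρ : Γ_{g,m} → GL(V) such that for every x ∈ {1,…,m}, ρ(c_x) is conjugate in GL(V) to an element of P_x; (c) Φ is equivariant: if φ' = (g_0,(l_x))·φ for (g_0,(l_x)) ∈ G_P, then Φ(φ') = g_0 · Φ(φ) · g_0⁻¹ (conjugation of the representation by g_0). -/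
/-- Generators of the fundamental group of a genus-`g` surface with `m` punctures. -/
abbrev SurfaceGen (g m : ℕ) := (Fin g ⊕ Fin g) ⊕ Fin m

/-- The single relator `(∏ i, aᵢ bᵢ aᵢ⁻¹ bᵢ⁻¹) · c₁ ⋯ c_m`. -/
def surfaceRelator (g m : ℕ) : FreeGroup (SurfaceGen g m) :=
  (List.ofFn fun i : Fin g =>
      FreeGroup.of (Sum.inl (Sum.inl i)) * FreeGroup.of (Sum.inl (Sum.inr i)) *
        (FreeGroup.of (Sum.inl (Sum.inl i)))⁻¹ * (FreeGroup.of (Sum.inl (Sum.inr i)))⁻¹).prod *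
    (List.ofFn fun x : Fin m => FreeGroup.of (Sum.inr x)).prod

/-- The fundamental group `Γ_{g,m}` of a compact genus-`g` surface with `m` punctures. -/
abbrev SurfaceGroup (g m : ℕ) :=
  PresentedGroup ({surfaceRelator g m} : Set (FreeGroup (SurfaceGen g m)))

/-- The generator `aᵢ`. -/
def genA {g m : ℕ} (i : Fin g) : SurfaceGroup g m := PresentedGroup.of (Sum.inl (Sum.inl i))

/-- The generator `bᵢ`. -/
def genB {g m : ℕ} (i : Fin g) : SurfaceGroup g m := PresentedGroup.of (Sum.inl (Sum.inr i))

/-- The generator `cₓ`. -/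
def genC {g m : ℕ} (x : Fin m) : SurfaceGroup g m := PresentedGroup.of (Sum.inr x)

/-- The flag `F_j := W_j ⊕ ⋯ ⊕ W_N` associated with a decomposition `V = W_1 ⊕ ⋯ ⊕ W_N`. -/
def flagOf {k V : Type} [Field k] [AddCommGroup V] [Module k V] {N : ℕ}
    (W : Fin N → Submodule k V) (j : Fin N) : Submodule k V :=
  ⨆ i, ⨆ _ : j ≤ i, W i

/-- The parabolic subgroup `P = {g ∈ GL(V) : g F_j = F_j for all j}` of the flag of `W`. -/
def parabOf {k V : Type} [Field k] [AddCommGroup V] [Module k V] {N : ℕ}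
    (W : Fin N → Submodule k V) : Set (Module.End k V)ˣ :=
  {u | ∀ j, Submodule.map (u : Module.End k V) (flagOf W j) = flagOf W j}

/-- The Levi subgroup `L = {g ∈ GL(V) : g Wᵢ = Wᵢ for all i}` of a decomposition `W`. -/
def leviOf {k V : Type} [Field k] [AddCommGroup V] [Module k V] {N : ℕ}
    (W : Fin N → Submodule k V) : Set (Module.End k V)ˣ :=
  {u | ∀ i, Submodule.map (u : Module.End k V) (W i) = W i}

/-!
Since `Γ_{g,m}` is presented by generators and one relation, a tuple of elements of `GL(V)`
satisfying that relation is the same as a homomorphism, and two homomorphisms agreeing on the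
generators coincide; this gives (a) and (c). For (b), write `c = C₂ C₁` and pick `gₓ` with
`C₁ gₓ⁻¹ ∈ L` and `gₓ C₂ ∈ P`; then `c = gₓ⁻¹ · (gₓ C₂)(C₁ gₓ⁻¹) · gₓ` is conjugate to an
element of `P`, since `L ⊆ P` and `P` is closed under products. Conversely, if `c = u p u⁻¹`
with `p ∈ P`, then `C₁ = u⁻¹`, `C₂ = c u`, `gₓ = u⁻¹` is an admissible factorisation.
-/

section SurfaceGroup

variable {g m : ℕ} {G : Type*} [Group G]

def surfaceWord (A B : Fin g → G) (C : Fin m → G) : G :=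
  (List.ofFn fun i => A i * B i * (A i)⁻¹ * (B i)⁻¹).prod * (List.ofFn C).prod

theorem FreeGroup.lift_surfaceRelator (f : SurfaceGen g m → G) :
    FreeGroup.lift f (surfaceRelator g m) =
      surfaceWord (fun i => f (.inl (.inl i))) (fun i => f (.inl (.inr i)))
        (fun x => f (.inr x)) := by
  simp [surfaceRelator, surfaceWord, map_list_prod, List.map_ofFn, Function.comp_def]

theorem SurfaceGroup.exists_hom_of_surfaceWord_eq_one {A B : Fin g → G} {C : Fin m → G}
    (h : surfaceWord A B C = 1) :
    ∃ ρ : SurfaceGroup g m →* G,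
      (∀ i, ρ (genA i) = A i) ∧ (∀ i, ρ (genB i) = B i) ∧ (∀ x, ρ (genC x) = C x) := by
  let f : SurfaceGen g m → G
    | .inl (.inl i) => A i
    | .inl (.inr i) => B i
    | .inr x => C x
  have hf : ∀ r ∈ ({surfaceRelator g m} : Set (FreeGroup (SurfaceGen g m))),
      FreeGroup.lift f r = 1 := by
    rintro r rfl
    rwa [FreeGroup.lift_surfaceRelator]
  exact ⟨PresentedGroup.toGroup hf, fun _ => PresentedGroup.toGroup.of hf,
    fun _ => PresentedGroup.toGroup.of hf, fun _ => PresentedGroup.toGroup.of hf⟩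

theorem SurfaceGroup.surfaceWord_apply_gens_eq_one (ρ : SurfaceGroup g m →* G) :
    surfaceWord (fun i => ρ (genA i)) (fun i => ρ (genB i)) (fun x => ρ (genC x)) = 1 := by
  have hrel : PresentedGroup.mk _ (surfaceRelator g m) = (1 : SurfaceGroup g m) :=
    (QuotientGroup.eq_one_iff _).mpr (Subgroup.subset_normalClosure rfl)
  have hlift : ρ (PresentedGroup.mk _ (surfaceRelator g m)) =
      FreeGroup.lift (fun a => ρ (PresentedGroup.of a)) (surfaceRelator g m) :=
    FreeGroup.lift_unique (ρ.comp (PresentedGroup.mk _)) fun _ => rfl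
  rw [hrel, map_one, FreeGroup.lift_surfaceRelator] at hlift
  exact hlift.symm

theorem SurfaceGroup.hom_ext {ρ ρ' : SurfaceGroup g m →* G}
    (hA : ∀ i, ρ (genA i) = ρ' (genA i)) (hB : ∀ i, ρ (genB i) = ρ' (genB i))
    (hC : ∀ x, ρ (genC x) = ρ' (genC x)) : ρ = ρ' :=
  PresentedGroup.ext fun
    | .inl (.inl i) => hA i
    | .inl (.inr i) => hB i
    | .inr x => hC x

end SurfaceGroup

section Parabolic

variable {k V : Type} [Field k] [AddCommGroup V] [Module k V] {N : ℕ}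
  {W : Fin N → Submodule k V}

theorem one_mem_leviOf : (1 : (Module.End k V)ˣ) ∈ leviOf W := fun _ => Submodule.map_id _

theorem mem_parabOf_of_mem_leviOf {u : (Module.End k V)ˣ} (hu : u ∈ leviOf W) :
    u ∈ parabOf W := fun j => by
  simp only [flagOf, Submodule.map_iSup]
  exact iSup_congr fun i => iSup_congr fun _ => hu i

theorem mul_mem_parabOf {u v : (Module.End k V)ˣ} (hu : u ∈ parabOf W)
    (hv : v ∈ parabOf W) : u * v ∈ parabOf W := fun j => by
  rw [Units.val_mul, Module.End.mul_eq_comp, Submodule.map_comp, hv j, hu j]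

theorem exists_leviOf_parabOf_factor_iff (c : (Module.End k V)ˣ) :
    (∃ C₁ C₂ gx : (Module.End k V)ˣ,
        c = C₂ * C₁ ∧ C₁ * gx⁻¹ ∈ leviOf W ∧ gx * C₂ ∈ parabOf W) ↔
      ∃ u p : (Module.End k V)ˣ, p ∈ parabOf W ∧ c = u * p * u⁻¹ := by
  constructor
  · rintro ⟨C₁, C₂, gx, rfl, hL, hP⟩
    exact ⟨gx⁻¹, gx * C₂ * (C₁ * gx⁻¹), mul_mem_parabOf hP (mem_parabOf_of_mem_leviOf hL),
      by group⟩
  · rintro ⟨u, p, hp, rfl⟩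
    refine ⟨u⁻¹, u * p, u⁻¹, by group, ?_, ?_⟩
    · simpa using one_mem_leviOf
    · simpa using hp

end Parabolic

theorem stmt2_general (k : Type) [Field k] (V : Type) [AddCommGroup V] [Module k V]
    (g m : ℕ)
    (nx : Fin m → ℕ)
    (W : (x : Fin m) → Fin (nx x) → Submodule k V) :
    -- (a) well-definedness of `Φ` on `ℛ`
    (∀ (A B : Fin g → (Module.End k V)ˣ) (C1 C2 : Fin m → (Module.End k V)ˣ),
      (List.ofFn fun i => A i * B i * (A i)⁻¹ * (B i)⁻¹).prod *
          (List.ofFn fun x => C2 x * C1 x).prod = 1 →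
      (∀ x, ∃ gx : (Module.End k V)ˣ,
        C1 x * gx⁻¹ ∈ leviOf (W x) ∧ gx * C2 x ∈ parabOf (W x)) →
      ∃ ρ : SurfaceGroup g m →* (Module.End k V)ˣ,
        (∀ i, ρ (genA i) = A i) ∧ (∀ i, ρ (genB i) = B i) ∧
          (∀ x, ρ (genC x) = C2 x * C1 x)) ∧
    -- (b) the image of `Φ`
    (∀ ρ : SurfaceGroup g m →* (Module.End k V)ˣ,
      (∃ (A B : Fin g → (Module.End k V)ˣ) (C1 C2 : Fin m → (Module.End k V)ˣ),
          (List.ofFn fun i => A i * B i * (A i)⁻¹ * (B i)⁻¹).prod *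
              (List.ofFn fun x => C2 x * C1 x).prod = 1 ∧
          (∀ x, ∃ gx : (Module.End k V)ˣ,
            C1 x * gx⁻¹ ∈ leviOf (W x) ∧ gx * C2 x ∈ parabOf (W x)) ∧
          (∀ i, ρ (genA i) = A i) ∧ (∀ i, ρ (genB i) = B i) ∧
          (∀ x, ρ (genC x) = C2 x * C1 x)) ↔
        (∀ x, ∃ u p : (Module.End k V)ˣ, p ∈ parabOf (W x) ∧
          ρ (genC x) = u * p * u⁻¹)) ∧
    -- (c) `G_P`-equivariance of `Φ`
    (∀ (A B : Fin g → (Module.End k V)ˣ) (C1 C2 : Fin m → (Module.End k V)ˣ)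
        (g0 : (Module.End k V)ˣ) (l : Fin m → (Module.End k V)ˣ),
      (∀ x, l x ∈ leviOf (W x)) →
      ∀ ρ ρ' : SurfaceGroup g m →* (Module.End k V)ˣ,
        ((∀ i, ρ (genA i) = A i) ∧ (∀ i, ρ (genB i) = B i) ∧
          (∀ x, ρ (genC x) = C2 x * C1 x)) →
        ((∀ i, ρ' (genA i) = g0 * A i * g0⁻¹) ∧ (∀ i, ρ' (genB i) = g0 * B i * g0⁻¹) ∧
          (∀ x, ρ' (genC x) = (g0 * C2 x * (l x)⁻¹) * (l x * C1 x * g0⁻¹))) →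
        ∀ γ, ρ' γ = g0 * ρ γ * g0⁻¹) := by
  refine ⟨fun A B C1 C2 hrel _ => SurfaceGroup.exists_hom_of_surfaceWord_eq_one hrel,
    fun ρ => ⟨?_, ?_⟩, ?_⟩
  · rintro ⟨A, B, C1, C2, -, hfactor, -, -, hC⟩ x
    obtain ⟨gx, hL, hP⟩ := hfactor x
    exact (exists_leviOf_parabOf_factor_iff _).mp ⟨C1 x, C2 x, gx, hC x, hL, hP⟩
  · intro hconj
    choose C1 C2 gx hC hL hP using fun x => (exists_leviOf_parabOf_factor_iff _).mpr (hconj x)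
    have hrel := SurfaceGroup.surfaceWord_apply_gens_eq_one ρ
    simp only [hC] at hrel
    exact ⟨_, _, C1, C2, hrel, fun x => ⟨gx x, hL x, hP x⟩, fun _ => rfl, fun _ => rfl, hC⟩
  · rintro A B C1 C2 g0 l - ρ ρ' ⟨hA, hB, hC⟩ ⟨hA', hB', hC'⟩
    have hconj : ρ' = (MulAut.conj g0).toMonoidHom.comp ρ :=
      SurfaceGroup.hom_ext (by simp [hA, hA']) (by simp [hB, hB']) fun x => by
        simp only [MonoidHom.comp_apply, MulEquiv.coe_toMonoidHom, MulAut.conj_apply, hC, hC']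
        group
    simp [hconj]

/-- The map `Φ : ℛ → Hom(Γ_{g,m}, GL(V))`, `Φ(φ)(aᵢ) = Aᵢ`, `Φ(φ)(bᵢ) = Bᵢ`,
`Φ(φ)(cₓ) = C_{x,2}·C_{x,1}`: (a) it is well defined (the prescribed images of the
generators satisfy the surface relation, so a homomorphism with these values on the
generators exists); (b) its image is exactly the set of homomorphisms `ρ` such that
each `ρ(cₓ)` is conjugate to an element of `P_x`; (c) it is `G_P`-equivariant. -/
theorem stmt2 (k : Type) [Field k] (V : Type) [AddCommGroup V] [Module k V]
    [FiniteDimensional k V] (n g m : ℕ) (hdim : Module.finrank k V = n)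
    (nx : Fin m → ℕ)
    (W : (x : Fin m) → Fin (nx x) → Submodule k V)
    (hindep : ∀ x, iSupIndep (W x)) (hsup : ∀ x, (⨆ i, W x i) = ⊤) :
    -- (a) well-definedness of `Φ` on `ℛ`
    (∀ (A B : Fin g → (Module.End k V)ˣ) (C1 C2 : Fin m → (Module.End k V)ˣ),
      (List.ofFn fun i => A i * B i * (A i)⁻¹ * (B i)⁻¹).prod *
          (List.ofFn fun x => C2 x * C1 x).prod = 1 →
      (∀ x, ∃ gx : (Module.End k V)ˣ,
        C1 x * gx⁻¹ ∈ leviOf (W x) ∧ gx * C2 x ∈ parabOf (W x)) →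
      ∃ ρ : SurfaceGroup g m →* (Module.End k V)ˣ,
        (∀ i, ρ (genA i) = A i) ∧ (∀ i, ρ (genB i) = B i) ∧
          (∀ x, ρ (genC x) = C2 x * C1 x)) ∧
    -- (b) the image of `Φ`
    (∀ ρ : SurfaceGroup g m →* (Module.End k V)ˣ,
      (∃ (A B : Fin g → (Module.End k V)ˣ) (C1 C2 : Fin m → (Module.End k V)ˣ),
          (List.ofFn fun i => A i * B i * (A i)⁻¹ * (B i)⁻¹).prod *
              (List.ofFn fun x => C2 x * C1 x).prod = 1 ∧
          (∀ x, ∃ gx : (Module.End k V)ˣ,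
            C1 x * gx⁻¹ ∈ leviOf (W x) ∧ gx * C2 x ∈ parabOf (W x)) ∧
          (∀ i, ρ (genA i) = A i) ∧ (∀ i, ρ (genB i) = B i) ∧
          (∀ x, ρ (genC x) = C2 x * C1 x)) ↔
        (∀ x, ∃ u p : (Module.End k V)ˣ, p ∈ parabOf (W x) ∧
          ρ (genC x) = u * p * u⁻¹)) ∧
    -- (c) `G_P`-equivariance of `Φ`
    (∀ (A B : Fin g → (Module.End k V)ˣ) (C1 C2 : Fin m → (Module.End k V)ˣ)
        (g0 : (Module.End k V)ˣ) (l : Fin m → (Module.End k V)ˣ),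
      (∀ x, l x ∈ leviOf (W x)) →
      ∀ ρ ρ' : SurfaceGroup g m →* (Module.End k V)ˣ,
        ((∀ i, ρ (genA i) = A i) ∧ (∀ i, ρ (genB i) = B i) ∧
          (∀ x, ρ (genC x) = C2 x * C1 x)) →
        ((∀ i, ρ' (genA i) = g0 * A i * g0⁻¹) ∧ (∀ i, ρ' (genB i) = g0 * B i * g0⁻¹) ∧
          (∀ x, ρ' (genC x) = (g0 * C2 x * (l x)⁻¹) * (l x * C1 x * g0⁻¹))) →
        ∀ γ, ρ' γ = g0 * ρ γ * g0⁻¹) :=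
  stmt2_general k V g m nx W
end

section
/- Let μ_1, μ_2 : ℂˣ → GL_n(ℂ) be cocharacters, μ_j(t) = h_j · diag(t^{d_{j,1}},…,t^{d_{j,n}}) · h_j⁻¹ with h_j ∈ GL_n(ℂ) and d_{j,1},…,d_{j,n} ∈ ℤ. Suppose there exist invertible matrices g, h ∈ GL_n(ℂ) such that both lim_{t→0} μ_1(t) · g · μ_2(t)⁻¹ and lim_{t→0} μ_2(t) · h · μ_1(t)⁻¹ exist. Then μ_1 and μ_2 are conjugate in GL_n(ℂ): the multisets of exponents {d_{1,1},…,d_{1,n}} and {d_{2,1},…,d_{2,n}} coincide, i.e. there exists u ∈ GL_n(ℂ) with μ_2(t) = u μ_1(t) u⁻¹ for all t. -/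
open Matrix Filter

/-- `MatLimExists n μ ν A` says the limit `lim_{t→0} μ(t)·A·ν(t)⁻¹` exists in the space of
`n × n` complex matrices, as `t → 0` through nonzero complex numbers. -/
def MatLimExists (n : ℕ) (μ ν : ℂˣ → GL (Fin n) ℂ) (A : Matrix (Fin n) (Fin n) ℂ) : Prop :=
  ∃ M : Matrix (Fin n) (Fin n) ℂ,
    Tendsto
      (fun t : ℂ =>
        if h : t = 0 then (0 : Matrix (Fin n) (Fin n) ℂ)
        else
          ((μ (Units.mk0 t h) : Matrix (Fin n) (Fin n) ℂ) * A *
            ((ν (Units.mk0 t h))⁻¹ : GL (Fin n) ℂ)))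
      (nhdsWithin (0 : ℂ) {(0 : ℂ)}ᶜ) (nhds M)


lemma aux_zpow_le {c : ℂ} (hc : c ≠ 0) {p q : ℤ} {L : ℂ}
    (h : Tendsto (fun t : ℂ => t ^ p * c * t ^ (-q)) (nhdsWithin 0 {(0:ℂ)}ᶜ) (nhds L)) :
    q ≤ p := by
  by_contra hpq
  push_neg at hpq
  set k := (q - p).toNat with hkdef
  have hk : (k : ℤ) = q - p := Int.toNat_of_nonneg (by omega)
  have hk0 : k ≠ 0 := by omega
  have hpow : Tendsto (fun t : ℂ => t ^ k) (nhdsWithin 0 {(0:ℂ)}ᶜ) (nhds 0) := by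
    have := (continuous_pow (M := ℂ) k).tendsto 0
    rw [zero_pow hk0] at this
    exact this.mono_left nhdsWithin_le_nhds
  have h2 : Tendsto (fun t : ℂ => t ^ k * (t ^ p * c * t ^ (-q)))
      (nhdsWithin 0 {(0:ℂ)}ᶜ) (nhds (0 * L)) := hpow.mul h
  rw [zero_mul] at h2
  have hev : ∀ᶠ t : ℂ in nhdsWithin 0 {(0:ℂ)}ᶜ,
      t ^ k * (t ^ p * c * t ^ (-q)) = c := by
    filter_upwards [self_mem_nhdsWithin] with t ht
    have ht0 : t ≠ 0 := ht
    have : t ^ k * (t ^ p * c * t ^ (-q)) = (t ^ (k:ℤ) * t ^ p * t ^ (-q)) * c := by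
      rw [zpow_natCast]; ring
    rw [this, ← zpow_add₀ ht0, ← zpow_add₀ ht0]
    have : (k : ℤ) + p + -q = 0 := by omega
    rw [this, zpow_zero, one_mul]
  have h3 : Tendsto (fun _ : ℂ => c) (nhdsWithin 0 {(0:ℂ)}ᶜ) (nhds 0) :=
    h2.congr' hev
  exact hc (tendsto_const_nhds_iff.mp h3)

/-- The diagonal cocharacter as a unit. -/
noncomputable def diagU {n : ℕ} (d : Fin n → ℤ) (t : ℂˣ) : GL (Fin n) ℂ where
  val := Matrix.diagonal (fun i => (t : ℂ) ^ d i)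
  inv := Matrix.diagonal (fun i => (t : ℂ) ^ (-d i))
  val_inv := by
    rw [Matrix.diagonal_mul_diagonal]
    convert Matrix.diagonal_one
    rw [← zpow_add₀ t.ne_zero, add_neg_cancel, zpow_zero]
  inv_val := by
    rw [Matrix.diagonal_mul_diagonal]
    convert Matrix.diagonal_one
    rw [← zpow_add₀ t.ne_zero, neg_add_cancel, zpow_zero]

lemma aux_exp_cond {n : ℕ} (μ ν : ℂˣ → GL (Fin n) ℂ) (a b : GL (Fin n) ℂ)
    (da db : Fin n → ℤ)
    (hμ : ∀ t : ℂˣ, (μ t : Matrix (Fin n) (Fin n) ℂ) =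
      (a : Matrix (Fin n) (Fin n) ℂ) * Matrix.diagonal (fun i => (t : ℂ) ^ (da i)) *
        ((a⁻¹ : GL (Fin n) ℂ) : Matrix (Fin n) (Fin n) ℂ))
    (hν : ∀ t : ℂˣ, (ν t : Matrix (Fin n) (Fin n) ℂ) =
      (b : Matrix (Fin n) (Fin n) ℂ) * Matrix.diagonal (fun i => (t : ℂ) ^ (db i)) *
        ((b⁻¹ : GL (Fin n) ℂ) : Matrix (Fin n) (Fin n) ℂ))
    (g : GL (Fin n) ℂ) (hg : MatLimExists n μ ν (g : Matrix (Fin n) (Fin n) ℂ))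
    (i j : Fin n)
    (hij : (((a⁻¹ * g * b : GL (Fin n) ℂ)) : Matrix (Fin n) (Fin n) ℂ) i j ≠ 0) :
    db j ≤ da i := by
  -- upgrade hμ, hν to unit-level equalities
  have hμ' : ∀ t : ℂˣ, μ t = a * diagU da t * a⁻¹ := by
    intro t; apply Units.ext
    simpa [Units.val_mul, diagU] using hμ t
  have hν' : ∀ t : ℂˣ, ν t = b * diagU db t * b⁻¹ := by
    intro t; apply Units.ext
    simpa [Units.val_mul, diagU] using hν t
  obtain ⟨M, hM⟩ := hg
  have hMc : Tendsto
      (fun t : ℂ =>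
        ((a⁻¹ : GL (Fin n) ℂ) : Matrix (Fin n) (Fin n) ℂ) *
          (if h : t = 0 then (0 : Matrix (Fin n) (Fin n) ℂ)
           else
            ((μ (Units.mk0 t h) : Matrix (Fin n) (Fin n) ℂ) * (g : Matrix (Fin n) (Fin n) ℂ) *
              ((ν (Units.mk0 t h))⁻¹ : GL (Fin n) ℂ))) * (b : Matrix (Fin n) (Fin n) ℂ))
      (nhdsWithin (0 : ℂ) {(0 : ℂ)}ᶜ)
      (nhds (((a⁻¹ : GL (Fin n) ℂ) : Matrix (Fin n) (Fin n) ℂ) * M *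
        (b : Matrix (Fin n) (Fin n) ℂ))) :=
    (tendsto_const_nhds.mul hM).mul tendsto_const_nhds
  have hev : ∀ᶠ t : ℂ in nhdsWithin (0 : ℂ) {(0 : ℂ)}ᶜ,
      ((a⁻¹ : GL (Fin n) ℂ) : Matrix (Fin n) (Fin n) ℂ) *
          (if h : t = 0 then (0 : Matrix (Fin n) (Fin n) ℂ)
           else
            ((μ (Units.mk0 t h) : Matrix (Fin n) (Fin n) ℂ) * (g : Matrix (Fin n) (Fin n) ℂ) *
              ((ν (Units.mk0 t h))⁻¹ : GL (Fin n) ℂ))) * (b : Matrix (Fin n) (Fin n) ℂ)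
        = Matrix.diagonal (fun k => t ^ da k) *
            ((a⁻¹ * g * b : GL (Fin n) ℂ) : Matrix (Fin n) (Fin n) ℂ) *
            Matrix.diagonal (fun k => t ^ (-db k)) := by
    filter_upwards [self_mem_nhdsWithin] with t ht
    have ht0 : t ≠ 0 := ht
    rw [dif_neg ht0]
    set u : ℂˣ := Units.mk0 t ht0 with hu
    have key : a⁻¹ * (μ u * g * (ν u)⁻¹) * b
        = diagU da u * (a⁻¹ * g * b) * (diagU db u)⁻¹ := by
      rw [hμ' u, hν' u]
      group
    have := congrArg (Units.val) key
    simp only [Units.val_mul] at this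
    have hcoe : (((diagU db u)⁻¹ : GL (Fin n) ℂ) : Matrix (Fin n) (Fin n) ℂ)
        = Matrix.diagonal (fun k => t ^ (-db k)) := rfl
    calc ((a⁻¹ : GL (Fin n) ℂ) : Matrix (Fin n) (Fin n) ℂ) *
          ((μ u : Matrix (Fin n) (Fin n) ℂ) * (g : Matrix (Fin n) (Fin n) ℂ) *
            ((ν u)⁻¹ : GL (Fin n) ℂ)) * (b : Matrix (Fin n) (Fin n) ℂ)
        = ((a⁻¹ * (μ u * g * (ν u)⁻¹) * b : GL (Fin n) ℂ) : Matrix (Fin n) (Fin n) ℂ) := by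
          simp [Units.val_mul]
      _ = _ := by
          rw [key]; simp only [Units.val_mul, hcoe]
          rfl
  have hM2 : Tendsto
      (fun t : ℂ => Matrix.diagonal (fun k => t ^ da k) *
            ((a⁻¹ * g * b : GL (Fin n) ℂ) : Matrix (Fin n) (Fin n) ℂ) *
            Matrix.diagonal (fun k => t ^ (-db k)))
      (nhdsWithin (0 : ℂ) {(0 : ℂ)}ᶜ)
      (nhds (((a⁻¹ : GL (Fin n) ℂ) : Matrix (Fin n) (Fin n) ℂ) * M *
        (b : Matrix (Fin n) (Fin n) ℂ))) := hMc.congr' hev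
  have hentry := ((continuous_id.matrix_elem i j).tendsto _).comp hM2
  simp only [Function.comp_def, id_eq, Matrix.diagonal_mul, Matrix.mul_diagonal] at hentry
  exact aux_zpow_le hij hentry

lemma aux_card_le {n : ℕ} (A : Matrix (Fin n) (Fin n) ℂ) (hA : IsUnit A)
    (S T : Finset (Fin n)) (h : ∀ i j, j ∈ T → A i j ≠ 0 → i ∈ S) :
    T.card ≤ S.card := by
  classical
  set L := Matrix.mulVecLin
    (A.submatrix ((↑) : {x // x ∈ S} → Fin n) ((↑) : {x // x ∈ T} → Fin n)) with hL
  have hinj : Function.Injective L := by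
    rw [← LinearMap.ker_eq_bot, eq_bot_iff]
    rintro x hx
    simp only [LinearMap.mem_ker] at hx
    set y : Fin n → ℂ := fun j => if hj : j ∈ T then x ⟨j, hj⟩ else 0 with hy
    have hsum : ∀ i, A.mulVec y i = ∑ j ∈ T.attach, A i (↑j) * x j := by
      intro i
      have h1 : A.mulVec y i = ∑ j : Fin n, A i j * y j := by
        simp [Matrix.mulVec, dotProduct]
      have h2 : ∑ j ∈ T, A i j * y j = ∑ j : Fin n, A i j * y j := by
        apply Finset.sum_subset (Finset.subset_univ T)
        intro j _ hj
        simp [hy, dif_neg hj]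
      have h3 : ∑ j ∈ T.attach, A i (↑j) * y ↑j = ∑ j ∈ T, A i j * y j :=
        Finset.sum_attach T (fun j => A i j * y j)
      have h4 : ∀ j : {x // x ∈ T}, y ↑j = x j := by
        intro j; simp [hy, dif_pos j.2]
      rw [h1, ← h2, ← h3]
      exact Finset.sum_congr rfl (fun j _ => by rw [h4])
    have hAy : A.mulVec y = 0 := by
      funext i
      show A.mulVec y i = (0 : Fin n → ℂ) i
      rw [Pi.zero_apply, hsum i]
      by_cases hi : i ∈ S
      · have hx' := congrFun hx ⟨i, hi⟩
        simp only [Matrix.mulVecLin_apply, Pi.zero_apply] at hx'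
        rw [← hx']
        rfl
      · refine Finset.sum_eq_zero fun j _ => ?_
        have hzero : A i ↑j = 0 := by
          by_contra hne
          exact hi (h i ↑j j.2 hne)
        rw [hzero, zero_mul]
    have hy0 : y = 0 := by
      have hdet : IsUnit A.det := (Matrix.isUnit_iff_isUnit_det A).mp hA
      have := congrArg (fun v => A⁻¹.mulVec v) hAy
      simpa [Matrix.mulVec_mulVec, Matrix.nonsing_inv_mul A hdet] using this
    have hx0 : x = 0 := by
      funext j
      have := congrFun hy0 ↑j
      simpa [hy, dif_pos j.2] using this
    exact (Submodule.mem_bot ℂ).mpr hx0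
  have hle := LinearMap.finrank_le_finrank_of_injective hinj
  simpa [Module.finrank_fintype_fun_eq_card] using hle

lemma aux_filter_card {n : ℕ} (d : Fin n → ℤ) (c : ℤ) :
    (Finset.univ.filter fun i => c = d i).card
      + (Finset.univ.filter fun i => c + 1 ≤ d i).card
      = (Finset.univ.filter fun i => c ≤ d i).card := by
  classical
  rw [← Finset.card_union_of_disjoint]
  · congr 1
    ext i
    simp only [Finset.mem_union, Finset.mem_filter, Finset.mem_univ, true_and]
    omega
  · rw [Finset.disjoint_left]
    intro i hi hi'
    simp only [Finset.mem_filter, Finset.mem_univ, true_and] at hi hi'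
    omega

lemma aux_multiset_eq {n : ℕ} (d1 d2 : Fin n → ℤ)
    (hN : ∀ c : ℤ, (Finset.univ.filter fun i => c ≤ d1 i).card
      = (Finset.univ.filter fun i => c ≤ d2 i).card) :
    Multiset.map d1 Finset.univ.val = Multiset.map d2 Finset.univ.val := by
  classical
  ext a
  rw [Multiset.count_map, Multiset.count_map]
  have e1 : Multiset.card (Multiset.filter (fun i => a = d1 i) Finset.univ.val)
      = (Finset.univ.filter fun i => a = d1 i).card := rfl
  have e2 : Multiset.card (Multiset.filter (fun i => a = d2 i) Finset.univ.val)
      = (Finset.univ.filter fun i => a = d2 i).card := rfl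
  rw [e1, e2]
  have k1 := aux_filter_card d1 a
  have k2 := aux_filter_card d2 a
  have n1 := hN a
  have n2 := hN (a + 1)
  omega

lemma aux_exists_perm {n : ℕ} (d1 d2 : Fin n → ℤ)
    (h : Multiset.map d1 Finset.univ.val = Multiset.map d2 Finset.univ.val) :
    ∃ σ : Equiv.Perm (Fin n), ∀ i, d1 (σ i) = d2 i := by
  classical
  have hcount : ∀ c : ℤ, Fintype.card {i // d2 i = c} = Fintype.card {i // d1 i = c} := by
    intro c
    have hc := congrArg (Multiset.count c) h
    rw [Multiset.count_map, Multiset.count_map] at hc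
    have ec : ∀ (d : Fin n → ℤ),
        (Finset.univ.filter fun i => d i = c) = (Finset.univ.filter fun i => c = d i) := by
      intro d; ext i; simp [eq_comm]
    rw [Fintype.card_subtype, Fintype.card_subtype, ec d1, ec d2]
    exact hc.symm
  have e : ∀ c : ℤ, {i // d2 i = c} ≃ {i // d1 i = c} :=
    fun c => Fintype.equivOfCardEq (hcount c)
  exact ⟨Equiv.ofFiberEquiv e, fun i => Equiv.ofFiberEquiv_map e i⟩

/-- The permutation matrix as a unit. -/
noncomputable def permU {n : ℕ} (σ : Equiv.Perm (Fin n)) : GL (Fin n) ℂ where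
  val := (σ.toPEquiv.toMatrix : Matrix (Fin n) (Fin n) ℂ)
  inv := (σ.symm.toPEquiv.toMatrix : Matrix (Fin n) (Fin n) ℂ)
  val_inv := by
    rw [← PEquiv.toMatrix_trans,
      ← Equiv.toPEquiv_trans, Equiv.self_trans_symm, Equiv.toPEquiv_refl, PEquiv.toMatrix_refl]
  inv_val := by
    rw [← PEquiv.toMatrix_trans,
      ← Equiv.toPEquiv_trans, Equiv.symm_trans_self, Equiv.toPEquiv_refl, PEquiv.toMatrix_refl]

lemma aux_perm_conj {n : ℕ} (σ : Equiv.Perm (Fin n)) (d1 d2 : Fin n → ℤ)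
    (hσ : ∀ i, d1 (σ i) = d2 i) (t : ℂˣ) :
    permU σ * diagU d1 t * (permU σ)⁻¹ = diagU d2 t := by
  apply Units.ext
  show ((σ.toPEquiv.toMatrix : Matrix (Fin n) (Fin n) ℂ)) * Matrix.diagonal (fun i => (t : ℂ) ^ d1 i) * ((σ.symm.toPEquiv.toMatrix : Matrix (Fin n) (Fin n) ℂ))
      = Matrix.diagonal (fun i => (t : ℂ) ^ d2 i)
  rw [PEquiv.toMatrix_toPEquiv_mul,
    PEquiv.mul_toMatrix_toPEquiv, Matrix.submatrix_submatrix]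
  have : (Matrix.diagonal fun i => (t : ℂ) ^ d1 i).submatrix ((σ : Fin n → Fin n) ∘ id)
      (id ∘ (σ.symm.symm : Fin n → Fin n))
      = (Matrix.diagonal fun i => (t : ℂ) ^ d1 i).submatrix σ σ := by
    simp [Function.comp_def]
  rw [this, Matrix.submatrix_diagonal_equiv]
  have hfun : (fun i => (t : ℂ) ^ d1 (σ i)) = fun i => (t : ℂ) ^ d2 i := by
    funext i; rw [hσ i]
  simp only [Function.comp_def]
  rw [hfun]

/-- If `μ₁, μ₂` are cocharacters of `GL_n(ℂ)`, `μⱼ(t) = hⱼ·diag(t^{d_{j,1}},…,t^{d_{j,n}})·hⱼ⁻¹`,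
and there are invertible `g, h` such that both `lim_{t→0} μ₁(t) g μ₂(t)⁻¹` and
`lim_{t→0} μ₂(t) h μ₁(t)⁻¹` exist, then `μ₁` and `μ₂` are conjugate in `GL_n(ℂ)`: the
multisets of exponents coincide, i.e. there is `u` with `μ₂(t) = u μ₁(t) u⁻¹` for all `t`. -/
theorem stmt8 (n : ℕ) (μ1 μ2 : ℂˣ → GL (Fin n) ℂ)
    (h1 h2 : GL (Fin n) ℂ) (d1 d2 : Fin n → ℤ)
    (hμ1 : ∀ t : ℂˣ, (μ1 t : Matrix (Fin n) (Fin n) ℂ) =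
      (h1 : Matrix (Fin n) (Fin n) ℂ) * Matrix.diagonal (fun i => (t : ℂ) ^ (d1 i)) *
        ((h1⁻¹ : GL (Fin n) ℂ) : Matrix (Fin n) (Fin n) ℂ))
    (hμ2 : ∀ t : ℂˣ, (μ2 t : Matrix (Fin n) (Fin n) ℂ) =
      (h2 : Matrix (Fin n) (Fin n) ℂ) * Matrix.diagonal (fun i => (t : ℂ) ^ (d2 i)) *
        ((h2⁻¹ : GL (Fin n) ℂ) : Matrix (Fin n) (Fin n) ℂ))
    (g h : GL (Fin n) ℂ)
    (hg : MatLimExists n μ1 μ2 (g : Matrix (Fin n) (Fin n) ℂ))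
    (hh : MatLimExists n μ2 μ1 (h : Matrix (Fin n) (Fin n) ℂ)) :
    (Multiset.map d1 Finset.univ.val = Multiset.map d2 Finset.univ.val) ∧
      ∃ u : GL (Fin n) ℂ, ∀ t : ℂˣ, μ2 t = u * μ1 t * u⁻¹ := by
  classical
  have cond1 : ∀ i j,
      (((h1⁻¹ * g * h2 : GL (Fin n) ℂ)) : Matrix (Fin n) (Fin n) ℂ) i j ≠ 0 → d2 j ≤ d1 i :=
    fun i j hij => aux_exp_cond μ1 μ2 h1 h2 d1 d2 hμ1 hμ2 g hg i j hij
  have cond2 : ∀ i j,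
      (((h2⁻¹ * h * h1 : GL (Fin n) ℂ)) : Matrix (Fin n) (Fin n) ℂ) i j ≠ 0 → d1 j ≤ d2 i :=
    fun i j hij => aux_exp_cond μ2 μ1 h2 h1 d2 d1 hμ2 hμ1 h hh i j hij
  have hN : ∀ c : ℤ, (Finset.univ.filter fun i => c ≤ d1 i).card
      = (Finset.univ.filter fun i => c ≤ d2 i).card := by
    intro c
    apply le_antisymm
    · refine aux_card_le ((h2⁻¹ * h * h1 : GL (Fin n) ℂ) : Matrix (Fin n) (Fin n) ℂ)
        (h2⁻¹ * h * h1).isUnit _ _ ?_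
      intro i j hj hne
      simp only [Finset.mem_filter, Finset.mem_univ, true_and] at hj ⊢
      exact le_trans hj (cond2 i j hne)
    · refine aux_card_le ((h1⁻¹ * g * h2 : GL (Fin n) ℂ) : Matrix (Fin n) (Fin n) ℂ)
        (h1⁻¹ * g * h2).isUnit _ _ ?_
      intro i j hj hne
      simp only [Finset.mem_filter, Finset.mem_univ, true_and] at hj ⊢
      exact le_trans hj (cond1 i j hne)
  have hmult : Multiset.map d1 Finset.univ.val = Multiset.map d2 Finset.univ.val :=
    aux_multiset_eq d1 d2 hN
  refine ⟨hmult, ?_⟩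
  obtain ⟨σ, hσ⟩ := aux_exists_perm d1 d2 hmult
  have hμ1' : ∀ t : ℂˣ, μ1 t = h1 * diagU d1 t * h1⁻¹ := by
    intro t; apply Units.ext
    simpa [Units.val_mul, diagU] using hμ1 t
  have hμ2' : ∀ t : ℂˣ, μ2 t = h2 * diagU d2 t * h2⁻¹ := by
    intro t; apply Units.ext
    simpa [Units.val_mul, diagU] using hμ2 t
  refine ⟨h2 * permU σ * h1⁻¹, fun t => ?_⟩
  rw [hμ1' t, hμ2' t, ← aux_perm_conj σ d1 d2 hσ t]
  group
end
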